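/- Let n ≥ 1, r ≥ 1, m ≥ 1, s ≥ 1, let S_1,…,S_s ⊆ [n] be pairwise disjoint nonempty subsets, and set a = r·∑_{t=1}^s a_{S_t}. If a ∈ m·P(K_n), then s·r ≤ m; consequently a is a sum of exactly m points of {a_S : S ⊆ [n]}, namely r copies of a_{S_t} for each t ∈ [s] together with m − s·r copies of a_∅ = 0. -/

import Mathlib

/-- Edges of the complete graph `K_n`: 2-element subsets of `Fin n`,
encoded as non-diagonal elements of `Sym2 (Fin n)`. -/
abbrev EdgeKn (n : ℕ) : Type := {e : Sym2 (Fin n) // ¬ e.IsDiag}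

/-- Coordinates of `ℝ^d`, `d = n + n(n-1)/2`: vertices and edges of `K_n`. -/
abbrev CoordKn (n : ℕ) : Type := Fin n ⊕ EdgeKn n

/-- The edge coordinate `{i,j}` for distinct `i, j`. -/
def edgeCoord {n : ℕ} (i j : Fin n) (h : i ≠ j) : CoordKn n :=
  Sum.inr ⟨s(i, j), fun hd => h (Sym2.mk_isDiag_iff.mp hd)⟩

/-- The characteristic vector `a_S` of `S ⊆ [n]`. -/
def charVec {n : ℕ} (S : Finset (Fin n)) : CoordKn n → ℝ
  | Sum.inl i => if i ∈ S then 1 else 0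
  | Sum.inr e => Sym2.lift ⟨fun i j => if i ∈ S ∧ j ∈ S then (1 : ℝ) else 0,
      fun i j => by simp [and_comm]⟩ e.1

/-- The standard inner product on `ℝ^d`. -/
def dotP {n : ℕ} (x y : CoordKn n → ℝ) : ℝ := ∑ c, x c * y c

/-- `S` is in the demand set `D(w, p)`: it maximizes `⟨w - p, a_T⟩` over all `T ⊆ [n]`. -/
def InDemand {n : ℕ} (w p : CoordKn n → ℝ) (S : Finset (Fin n)) : Prop :=
  ∀ T : Finset (Fin n),
    dotP (fun c => w c - p c) (charVec T) ≤ dotP (fun c => w c - p c) (charVec S)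

/-- The correlation polytope `P(K_n)`. -/
def corrPolytope (n : ℕ) : Set (CoordKn n → ℝ) :=
  convexHull ℝ (Set.range (charVec (n := n)))

/-- The dilate `m·A` of a set `A ⊆ ℝ^d`. -/
def dilate {n : ℕ} (m : ℕ) (A : Set (CoordKn n → ℝ)) : Set (CoordKn n → ℝ) :=
  {x | ∃ y ∈ A, x = (m : ℝ) • y}

/-- `F` is a face of `P(K_n)`: the set of maximizers of some linear functional `⟨c, ·⟩`. -/
def IsFaceOf {n : ℕ} (F : Set (CoordKn n → ℝ)) : Prop :=
  ∃ c : CoordKn n → ℝ,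
    F = {x | x ∈ corrPolytope n ∧ ∀ y ∈ corrPolytope n, dotP c y ≤ dotP c x}

/-! Pick `v_t ∈ S_t` and put `V = {v_1, …, v_s}`. The clique inequality
`∑_{i ∈ V} x_i - ∑_{ij ⊆ V} x_ij ≤ 1` holds at every vertex `a_T` of `P(K_n)`, where the left side
is `k - k(k-1)/2` with `k = |V ∩ T|`, hence on all of `P(K_n)`. Since `V` meets each `S_t` in
exactly one point, the left side equals `s` at `∑_t a_{S_t}`; evaluating it at `a = m • y` with
`y ∈ P(K_n)` gives `r s ≤ m`. The decomposition of `a` is then the list of blocks itself. -/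

open Finset

section CharVec

variable {n : ℕ}

lemma charVec_inl (S : Finset (Fin n)) (i : Fin n) :
    charVec S (Sum.inl i) = if i ∈ S then 1 else 0 := rfl

lemma charVec_inr (S : Finset (Fin n)) (e : EdgeKn n) :
    charVec S (Sum.inr e) = if e.1 ∈ S.sym2 then 1 else 0 := by
  obtain ⟨e, he⟩ := e
  induction e using Sym2.ind with
  | _ i j => simp [charVec]

lemma charVec_empty : charVec (∅ : Finset (Fin n)) = 0 := by
  funext x
  cases x <;> simp [charVec_inl, charVec_inr]

lemma charVec_mul_charVec (A B : Finset (Fin n)) (x : CoordKn n) :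
    charVec A x * charVec B x = charVec (A ∩ B) x := by
  cases x with
  | inl i => simp only [charVec_inl, mem_inter, ite_zero_mul_ite_zero, mul_one]
  | inr e =>
    obtain ⟨e, he⟩ := e
    induction e using Sym2.ind with
    | _ i j =>
      simp only [charVec_inr, mk_mem_sym2_iff, mem_inter, ite_zero_mul_ite_zero, mul_one]
      congr 1
      exact propext (by tauto)

lemma sum_charVec_inl (S : Finset (Fin n)) : ∑ i, charVec S (Sum.inl i) = #S := by
  simp [charVec_inl]

lemma sum_charVec_inr (S : Finset (Fin n)) :
    ∑ e : EdgeKn n, charVec S (Sum.inr e) = #{z ∈ S.sym2 | ¬z.IsDiag} := by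
  simp only [charVec_inr]
  rw [← Finset.sum_subtype {z | ¬z.IsDiag} (by simp) (fun z => if z ∈ S.sym2 then (1 : ℝ) else 0),
    Finset.sum_boole, Finset.filter_filter]
  congr 2
  ext z
  simp [and_comm]

end CharVec

lemma card_sub_one_le_card_filter_not_isDiag_sym2 {α : Type*} [DecidableEq α] (W : Finset α) :
    #W - 1 ≤ #{z ∈ W.sym2 | ¬z.IsDiag} := by
  rcases W.eq_empty_or_nonempty with rfl | ⟨w, hw⟩
  · simp
  rw [← card_erase_of_mem hw]
  refine card_le_card_of_injOn (fun i => s(w, i)) (fun i hi => ?_) (fun i _ j _ hij => ?_)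
  · obtain ⟨hiw, hi⟩ := mem_erase.mp hi
    simpa [mk_mem_sym2_iff, hw, hi] using hiw.symm
  · exact Sym2.congr_right.mp hij

section Clique

variable {n : ℕ}

lemma dotP_sum {ι : Type*} (c : CoordKn n → ℝ) (s : Finset ι) (x : ι → CoordKn n → ℝ) :
    dotP c (∑ i ∈ s, x i) = ∑ i ∈ s, dotP c (x i) :=
  dotProduct_sum c s x

lemma dotP_smul (c : CoordKn n → ℝ) (k : ℝ) (x : CoordKn n → ℝ) :
    dotP c (k • x) = k * dotP c x :=
  dotProduct_smul k c x

lemma dotP_le_of_mem_corrPolytope {c : CoordKn n → ℝ} {β : ℝ}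
    (h : ∀ T, dotP c (charVec T) ≤ β) {y : CoordKn n → ℝ} (hy : y ∈ corrPolytope n) :
    dotP c y ≤ β := by
  refine convexHull_min ?_ (convex_halfSpace_le ?_ β) hy
  · rintro _ ⟨T, rfl⟩
    exact h T
  · exact ⟨dotProduct_add c, dotP_smul c⟩

def cliqueFunctional (V : Finset (Fin n)) : CoordKn n → ℝ
  | Sum.inl i => charVec V (Sum.inl i)
  | Sum.inr e => -charVec V (Sum.inr e)

lemma dotP_cliqueFunctional_charVec (V T : Finset (Fin n)) :
    dotP (cliqueFunctional V) (charVec T)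
      = #(V ∩ T) - #{z ∈ (V ∩ T).sym2 | ¬z.IsDiag} := by
  rw [dotP, Fintype.sum_sum_type, ← sum_charVec_inl, ← sum_charVec_inr, sub_eq_add_neg,
    ← sum_neg_distrib]
  simp only [cliqueFunctional, neg_mul, charVec_mul_charVec]

lemma dotP_cliqueFunctional_charVec_le_one (V T : Finset (Fin n)) :
    dotP (cliqueFunctional V) (charVec T) ≤ 1 := by
  rw [dotP_cliqueFunctional_charVec, sub_le_iff_le_add]
  exact_mod_cast Nat.sub_le_iff_le_add'.mp (card_sub_one_le_card_filter_not_isDiag_sym2 (V ∩ T))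

end Clique

lemma mul_le_of_smul_sum_charVec_mem_dilate {n s : ℕ} (S : Fin s → Finset (Fin n))
    (hne : ∀ t, (S t).Nonempty) (hdisj : ∀ t t' : Fin s, t ≠ t' → Disjoint (S t) (S t'))
    {r m : ℕ} (h : (r : ℝ) • ∑ t, charVec (S t) ∈ dilate m (corrPolytope n)) :
    s * r ≤ m := by
  obtain ⟨y, hy, hry⟩ := h
  choose v hv using hne
  obtain ⟨V, hV⟩ : ∃ V : Finset (Fin n), ∀ t, V ∩ S t = {v t} := by
    refine ⟨univ.image v, fun t => ?_⟩
    ext i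
    simp only [mem_inter, mem_image, mem_univ, true_and, mem_singleton]
    constructor
    · rintro ⟨⟨t', rfl⟩, hi⟩
      by_contra hne
      exact disjoint_left.mp (hdisj t' t fun h => hne (congrArg v h)) (hv t') hi
    · rintro rfl
      exact ⟨⟨t, rfl⟩, hv t⟩
  have hval : dotP (cliqueFunctional V) (∑ t, charVec (S t)) = s := by
    simp [dotP_sum, dotP_cliqueFunctional_charVec, hV, filter_singleton]
  have hle : dotP (cliqueFunctional V) y ≤ 1 :=
    dotP_le_of_mem_corrPolytope (dotP_cliqueFunctional_charVec_le_one V) hy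
  have key : (r : ℝ) * s = m * dotP (cliqueFunctional V) y := by
    simpa only [dotP_smul, hval] using congrArg (dotP (cliqueFunctional V)) hry
  have : (s : ℝ) * r ≤ m := by nlinarith
  exact_mod_cast this

section PadBlocks

variable {β : Type*} {s r m : ℕ}

def blockEquiv (h : s * r ≤ m) : Fin m ≃ (Fin s × Fin r) ⊕ Fin (m - s * r) :=
  (finCongr (Nat.add_sub_cancel' h).symm).trans
    (finSumFinEquiv.symm.trans (Equiv.sumCongr finProdFinEquiv.symm (Equiv.refl _)))

def padBlocks (S : Fin s → β) (d : β) (h : s * r ≤ m) : Fin m → β :=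
  Sum.elim (fun p : Fin s × Fin r => S p.1) (fun _ => d) ∘ blockEquiv h

lemma sum_padBlocks {M : Type*} [AddCommMonoid M] (S : Fin s → β) (d : β) (h : s * r ≤ m)
    (g : β → M) :
    ∑ b, g (padBlocks S d h b) = r • ∑ t, g (S t) + (m - s * r) • g d := by
  rw [← (blockEquiv h).symm.sum_comp]
  simp [padBlocks, Fintype.sum_prod_type, Finset.smul_sum]

variable [DecidableEq β]

lemma card_filter_padBlocks_eq {S : Fin s → β} (hS : Function.Injective S) {d : β}
    (hd : ∀ t, S t ≠ d) (h : s * r ≤ m) (t : Fin s) :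
    #{b | padBlocks S d h b = S t} = r := by
  rw [card_filter, sum_padBlocks S d h (fun x => if x = S t then 1 else 0)]
  simp [hS.eq_iff, (hd t).symm]

lemma card_filter_padBlocks_eq_default {S : Fin s → β} {d : β} (hd : ∀ t, S t ≠ d)
    (h : s * r ≤ m) :
    #{b | padBlocks S d h b = d} = m - s * r := by
  rw [card_filter, sum_padBlocks S d h (fun x => if x = d then 1 else 0)]
  simp [hd]

end PadBlocks

theorem stmt13_general (n r m s : ℕ)
    (Ssets : Fin s → Finset (Fin n)) (hne : ∀ t, (Ssets t).Nonempty)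
    (hdisj : ∀ t t' : Fin s, t ≠ t' → Disjoint (Ssets t) (Ssets t'))
    (a : CoordKn n → ℝ) (hadef : a = (r : ℝ) • ∑ t, charVec (Ssets t))
    (haP : a ∈ dilate m (corrPolytope n)) :
    s * r ≤ m ∧
    ∃ T : Fin m → Finset (Fin n),
      (∀ t : Fin s, (Finset.univ.filter (fun b => T b = Ssets t)).card = r) ∧
      (Finset.univ.filter (fun b => T b = (∅ : Finset (Fin n)))).card
        = m - s * r ∧
      a = ∑ b, charVec (T b) := by
  subst hadef
  have hsm : s * r ≤ m := mul_le_of_smul_sum_charVec_mem_dilate Ssets hne hdisj haP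
  have hempty : ∀ t, Ssets t ≠ ∅ := fun t => (hne t).ne_empty
  have hinj : Function.Injective Ssets := fun t t' h => by
    by_contra hne'
    exact hempty t (disjoint_self.mp (h ▸ hdisj t t' hne'))
  refine ⟨hsm, padBlocks Ssets ∅ hsm, card_filter_padBlocks_eq hinj hempty hsm,
    card_filter_padBlocks_eq_default hempty hsm, ?_⟩
  rw [sum_padBlocks, charVec_empty, smul_zero, add_zero, Nat.cast_smul_eq_nsmul]

/-- Let `S_1, …, S_s ⊆ [n]` be pairwise disjoint nonempty sets and
`a = r·∑_t a_{S_t}`. If `a ∈ m·P(K_n)` then `s·r ≤ m`, and consequently `a`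
is a sum of exactly `m` characteristic vectors: `r` copies of each `a_{S_t}`
and `m - s·r` copies of `a_∅ = 0`. -/
theorem stmt13 (n r m s : ℕ) (hn : 1 ≤ n) (hr : 1 ≤ r) (hm : 1 ≤ m)
    (hs : 1 ≤ s)
    (Ssets : Fin s → Finset (Fin n)) (hne : ∀ t, (Ssets t).Nonempty)
    (hdisj : ∀ t t' : Fin s, t ≠ t' → Disjoint (Ssets t) (Ssets t'))
    (a : CoordKn n → ℝ) (hadef : a = (r : ℝ) • ∑ t, charVec (Ssets t))
    (haP : a ∈ dilate m (corrPolytope n)) :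
    s * r ≤ m ∧
    ∃ T : Fin m → Finset (Fin n),
      (∀ t : Fin s, (Finset.univ.filter (fun b => T b = Ssets t)).card = r) ∧
      (Finset.univ.filter (fun b => T b = (∅ : Finset (Fin n)))).card
        = m - s * r ∧
      a = ∑ b, charVec (T b) :=
  stmt13_general n r m s Ssets hne hdisj a hadef haP
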